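/- arXiv:2008.13589 — 2 statements merged into one kernel-verified Lean document; each statement's English description precedes it below -/
import Mathlib

section
/- Let G be an undirected graph with minimum degree Δ, and run the biased majority dynamics with bias α ≤ (1-ε)/2 for a constant 0 < ε < 1, started from the all-zeros configuration. Then the expected absorption time τ to reach the all-ones configuration satisfies E[τ] ≥ e^{ε²Δ/6}/(6n). -/
/-! Call a node *marked* if its last update set it to `1` although a strict majority of its
neighbours held `0`: only the `α`-coin can do this. As long as no node has a marked majority of
neighbours, majority updates never create a `1`, so every `1` is marked and the all-ones
configuration is not reached. The marks are dominated by independent `α`-coins, so by a Chernoff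
bound a fixed node has a marked majority at a fixed time with probability at most
`(2√(α(1-α)))^Δ ≤ e^{-ε²Δ/6}`. A union bound over times and nodes gives
`P(τ ≤ t) ≤ (t+1) n e^{-ε²Δ/6}`, so `P(τ > t) ≥ 1/2` during the first `e^{ε²Δ/6}/(2n)` rounds. -/

open MeasureTheory Finset
open scoped Classical

/-- Probability that the majority rule outputs `1` at node `u` in configuration
`c` (majority of neighbors, ties broken uniformly). -/
noncomputable def majorityProb {V : Type*} [Fintype V] (G : SimpleGraph V)
    (c : V → Bool) (u : V) : ℝ :=
  if G.degree u < 2 * ((G.neighborFinset u).filter (fun v => c v = true)).card then 1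
  else if 2 * ((G.neighborFinset u).filter (fun v => c v = true)).card = G.degree u
  then 1 / 2 else 0

/-- One-step transition probability of the biased majority dynamics: a uniformly
random node `u` updates, adopting `1` with probability `α` and otherwise the
majority value among its neighbors. -/
noncomputable def stepProb {V : Type*} [Fintype V] (G : SimpleGraph V) (α : ℝ)
    (c c' : V → Bool) : ℝ :=
  (1 / Fintype.card V) *
    ∑ u : V,
      ((if c' = Function.update c u true then α + (1 - α) * majorityProb G c u else 0) +
        (if c' = Function.update c u false
          then 1 - (α + (1 - α) * majorityProb G c u) else 0))

namespace BiasedMajority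

section PathExpectation

variable {A : Type*} [Fintype A]

/-- The expectation of `F` after `k` further steps of the chain on histories that moves from `h`
to `a :: h` with weight `w h a` (histories are listed newest first). -/
noncomputable def pathExp (w : List A → A → ℝ) : ℕ → (List A → ℝ) → List A → ℝ
  | 0, F, h => F h
  | k + 1, F, h => ∑ a, w h a * pathExp w k F (a :: h)

variable {w : List A → A → ℝ}

lemma pathExp_zero (F : List A → ℝ) (h : List A) : pathExp w 0 F h = F h := rfl

lemma pathExp_succ (k : ℕ) (F : List A → ℝ) (h : List A) :
    pathExp w (k + 1) F h = ∑ a, w h a * pathExp w k F (a :: h) := rfl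

lemma pathExp_succ' (k : ℕ) (F : List A → ℝ) (h : List A) :
    pathExp w (k + 1) F h = pathExp w k (fun l => ∑ a, w l a * F (a :: l)) h := by
  induction k generalizing h with
  | zero => rfl
  | succ k ih => exact sum_congr rfl fun a _ => by rw [ih]

lemma pathExp_nonneg (hw : ∀ h a, 0 ≤ w h a) {F : List A → ℝ} (hF : ∀ l, 0 ≤ F l) (k : ℕ)
    (h : List A) : 0 ≤ pathExp w k F h := by
  induction k generalizing h with
  | zero => exact hF h
  | succ k ih => exact sum_nonneg fun a _ => mul_nonneg (hw h a) (ih _)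

lemma pathExp_mono (hw : ∀ h a, 0 ≤ w h a) {k : ℕ} {F₁ F₂ : List A → ℝ} {h : List A}
    (hF : ∀ l : List A, l.length = k + h.length → F₁ l ≤ F₂ l) :
    pathExp w k F₁ h ≤ pathExp w k F₂ h := by
  induction k generalizing h with
  | zero => exact hF h (zero_add _).symm
  | succ k ih =>
    refine sum_le_sum fun a _ => mul_le_mul_of_nonneg_left (ih fun l hl => hF l ?_) (hw h a)
    rw [hl, List.length_cons]
    ring

lemma pathExp_add (k : ℕ) (F₁ F₂ : List A → ℝ) (h : List A) :
    pathExp w k (fun l => F₁ l + F₂ l) h = pathExp w k F₁ h + pathExp w k F₂ h := by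
  induction k generalizing h with
  | zero => rfl
  | succ k ih => simp only [pathExp_succ, ih, mul_add, sum_add_distrib]

lemma pathExp_const_mul (k : ℕ) (c : ℝ) (F : List A → ℝ) (h : List A) :
    pathExp w k (fun l => c * F l) h = c * pathExp w k F h := by
  induction k generalizing h with
  | zero => rfl
  | succ k ih => simp only [pathExp_succ, ih, mul_sum, mul_left_comm]

lemma pathExp_sum {ι : Type*} (s : Finset ι) (k : ℕ) (F : ι → List A → ℝ) (h : List A) :
    pathExp w k (fun l => ∑ i ∈ s, F i l) h = ∑ i ∈ s, pathExp w k (F i) h := by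
  induction k generalizing h with
  | zero => rfl
  | succ k ih =>
    simp only [pathExp_succ, ih, mul_sum]
    exact sum_comm

lemma pathExp_drop_one (hw : ∀ h, ∑ a, w h a = 1) (k : ℕ) (F : List A → ℝ) (h : List A) :
    pathExp w (k + 1) (fun l => F (l.drop 1)) h = pathExp w k F h := by
  induction k generalizing h with
  | zero => simp only [pathExp_succ, pathExp_zero, List.drop_succ_cons, List.drop_zero, ← sum_mul,
      hw, one_mul]
  | succ k ih => exact sum_congr rfl fun a _ => by rw [ih]

lemma pathExp_drop (hw : ∀ h, ∑ a, w h a = 1) {i k : ℕ} (hik : i ≤ k) (F : List A → ℝ)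
    (h : List A) : pathExp w k (fun l => F (l.drop i)) h = pathExp w (k - i) F h := by
  induction i generalizing k with
  | zero => rfl
  | succ i ih =>
    obtain ⟨k, rfl⟩ : ∃ k', k = k' + 1 := ⟨k - 1, by omega⟩
    have hdrop : (fun l : List A => F (l.drop (i + 1))) = fun l => F ((l.drop 1).drop i) := by
      simp only [List.drop_drop, add_comm]
    rw [hdrop, pathExp_drop_one hw k (fun l => F (l.drop i)), ih (by omega)]
    congr 1
    omega

lemma pathExp_map {B : Type*} [Fintype B] {v : List B → B → ℝ} (π : List A → List B)
    (g : List A → A → B) (hπ : ∀ h a, π (a :: h) = g h a :: π h)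
    (hwv : ∀ h (Φ : B → ℝ), ∑ a, w h a * Φ (g h a) = ∑ b, v (π h) b * Φ b)
    (k : ℕ) (F : List B → ℝ) (h : List A) :
    pathExp v k F (π h) = pathExp w k (fun l => F (π l)) h := by
  induction k generalizing h with
  | zero => rfl
  | succ k ih =>
    simp only [pathExp_succ, ← ih, hπ]
    exact (hwv h _).symm

end PathExpectation

section MarkovChain

variable {σ : Type*}

def history (t : ℕ) (f : ℕ → σ) : List σ := (List.range (t + 1)).reverse.map f

lemma history_zero (f : ℕ → σ) : history 0 f = [f 0] := rfl

lemma history_succ (t : ℕ) (f : ℕ → σ) : history (t + 1) f = f (t + 1) :: history t f := by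
  simp [history, List.range_succ]

lemma headI_history [Inhabited σ] (t : ℕ) (f : ℕ → σ) : (history t f).headI = f t := by
  cases t <;> simp [history_zero, history_succ]

lemma history_congr {t : ℕ} {f g : ℕ → σ} (h : ∀ s ≤ t, f s = g s) : history t f = history t g :=
  List.map_congr_left fun s hs => h s (by simpa [Nat.lt_succ_iff] using hs)

lemma mem_history {t : ℕ} {f : ℕ → σ} {c : σ} : c ∈ history t f ↔ ∃ s ≤ t, f s = c := by
  simp [history]

lemma history_update_succ (t : ℕ) (f : ℕ → σ) (c : σ) :
    history (t + 1) (Function.update f (t + 1) c) = c :: history t f := by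
  rw [history_succ, Function.update_self,
    history_congr fun s hs => Function.update_of_ne (by omega) c f]

variable {Ω : Type*} {X : ℕ → Ω → σ}

lemma setOf_forall_le_succ_update (t : ℕ) (f : ℕ → σ) (c : σ) :
    {ω | ∀ s ≤ t + 1, X s ω = Function.update f (t + 1) c s}
      = {ω | X (t + 1) ω = c ∧ ∀ s ≤ t, X s ω = f s} := by
  ext ω
  refine ⟨fun h => ⟨by simpa using h (t + 1) le_rfl, fun s hs => ?_⟩, fun ⟨hc, h⟩ s hs => ?_⟩
  · simpa [Function.update_of_ne (show s ≠ t + 1 by omega)] using h s (by omega)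
  · rcases Nat.lt_or_ge s (t + 1) with hst | hst
    · rw [Function.update_of_ne (by omega)]
      exact h s (by omega)
    · rw [show s = t + 1 by omega, Function.update_self, hc]

variable [MeasurableSpace Ω]

def IsMarkovChain (μ : Measure Ω) (X : ℕ → Ω → σ) (P : σ → σ → ℝ) : Prop :=
  ∀ (t : ℕ) (f : ℕ → σ) (c' : σ), μ {ω | X (t + 1) ω = c' ∧ ∀ s ≤ t, X s ω = f s}
    = ENNReal.ofReal (P (f t) c') * μ {ω | ∀ s ≤ t, X s ω = f s}

variable {μ : Measure Ω} [Fintype σ] [Inhabited σ] {P : σ → σ → ℝ}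

lemma measure_history_mem_inter_le (hP : ∀ c c', 0 ≤ P c c')
    (hX : IsMarkovChain μ X P)
    (E : Set (List σ)) (k : ℕ) : ∀ (t : ℕ) (f : ℕ → σ),
      μ ({ω | history (t + k) (X · ω) ∈ E} ∩ {ω | ∀ s ≤ t, X s ω = f s})
        ≤ ENNReal.ofReal (pathExp (fun h => P h.headI) k (E.indicator 1) (history t f))
          * μ {ω | ∀ s ≤ t, X s ω = f s} := by
  induction k with
  | zero =>
    intro t f
    by_cases hE : history t f ∈ E
    · simpa [pathExp_zero, hE] using measure_mono Set.inter_subset_right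
    · have hempty : {ω | history (t + 0) (X · ω) ∈ E} ∩ {ω | ∀ s ≤ t, X s ω = f s} = ∅ :=
        Set.eq_empty_of_forall_notMem fun ω ⟨hω, hA⟩ => hE (history_congr hA ▸ hω)
      rw [add_zero] at hempty
      simp [hempty]
  | succ k ih =>
    intro t f
    have hcover : {ω | history (t + (k + 1)) (X · ω) ∈ E} ∩ {ω | ∀ s ≤ t, X s ω = f s}
        ⊆ ⋃ c, {ω | history (t + 1 + k) (X · ω) ∈ E}
            ∩ {ω | ∀ s ≤ t + 1, X s ω = Function.update f (t + 1) c s} := by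
      rintro ω ⟨hω, hA⟩
      refine Set.mem_iUnion.2 ⟨X (t + 1) ω, by rwa [add_right_comm, add_assoc], ?_⟩
      rw [setOf_forall_le_succ_update]
      exact ⟨rfl, hA⟩
    have hpiece : ∀ c, μ ({ω | history (t + 1 + k) (X · ω) ∈ E}
          ∩ {ω | ∀ s ≤ t + 1, X s ω = Function.update f (t + 1) c s})
        ≤ ENNReal.ofReal (P (f t) c * pathExp (fun h => P h.headI) k (E.indicator 1)
            (c :: history t f)) * μ {ω | ∀ s ≤ t, X s ω = f s} := by
      intro c
      refine (ih (t + 1) _).trans_eq ?_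
      rw [history_update_succ, setOf_forall_le_succ_update, hX, ← mul_assoc,
        mul_comm (ENNReal.ofReal (pathExp _ _ _ _)), ← ENNReal.ofReal_mul (hP _ _)]
    have hterm_nonneg : ∀ c, 0 ≤ P (f t) c * pathExp (fun h => P h.headI) k (E.indicator 1)
        (c :: history t f) := fun c =>
      mul_nonneg (hP _ _) (pathExp_nonneg (fun _ _ => hP _ _)
        (fun _ => Set.indicator_nonneg (fun _ _ => zero_le_one) _) _ _)
    calc _ ≤ ∑ c, μ ({ω | history (t + 1 + k) (X · ω) ∈ E}
          ∩ {ω | ∀ s ≤ t + 1, X s ω = Function.update f (t + 1) c s}) :=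
          (measure_mono hcover).trans (measure_iUnion_fintype_le μ _)
      _ ≤ _ := sum_le_sum fun c _ => hpiece c
      _ = _ := by
        rw [← sum_mul, ← ENNReal.ofReal_sum_of_nonneg fun c _ => hterm_nonneg c, pathExp_succ,
          headI_history]

lemma measure_history_mem_le [IsProbabilityMeasure μ] (hP : ∀ c c', 0 ≤ P c c')
    (hX : IsMarkovChain μ X P)
    {c₀ : σ} (hstart : ∀ᵐ ω ∂μ, X 0 ω = c₀) (E : Set (List σ)) (t : ℕ) :
    μ {ω | history t (X · ω) ∈ E}
      ≤ ENNReal.ofReal (pathExp (fun h => P h.headI) t (E.indicator 1) [c₀]) := by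
  calc μ {ω | history t (X · ω) ∈ E}
      ≤ μ ({ω | history (0 + t) (X · ω) ∈ E} ∩ {ω | ∀ s ≤ 0, X s ω = (fun _ => c₀) s}) :=
        measure_mono_ae <| hstart.mono fun ω h0 hω =>
          ⟨by rwa [zero_add], fun s hs => by rwa [Nat.le_zero.1 hs]⟩
    _ ≤ _ := measure_history_mem_inter_le hP hX E t 0 _
    _ ≤ _ := mul_le_of_le_one_right' prob_le_one

end MarkovChain

section Dynamics

variable {V : Type*}

/-- The configuration reached from all zeros by the updates `(node, new value)` of `r`, listed
newest first. -/
noncomputable def cfg : List (V × Bool) → V → Bool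
  | [] => fun _ => false
  | p :: r => Function.update (cfg r) p.1 p.2

noncomputable def cfgs (r : List (V × Bool)) : List (V → Bool) := r.tails.map cfg

lemma cfgs_cons (p : V × Bool) (r : List (V × Bool)) : cfgs (p :: r) = cfg (p :: r) :: cfgs r := by
  simp [cfgs]

lemma headI_cfgs (r : List (V × Bool)) : (cfgs r).headI = cfg r := by
  cases r <;> simp [cfgs]

variable [Fintype V] (G : SimpleGraph V) (α : ℝ)

noncomputable def neighborOnes (c : V → Bool) (u : V) : ℕ := #{v ∈ G.neighborFinset u | c v = true}

noncomputable def updateProb (c : V → Bool) (u : V) : ℝ := α + (1 - α) * majorityProb G c u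

/-- The dynamics refined so that a step records which node updated and to which value: the marks
below depend on this, and the sequence of configurations does not determine it. -/
noncomputable def stepWeight (r : List (V × Bool)) (p : V × Bool) : ℝ :=
  (Fintype.card V : ℝ)⁻¹ *
    if p.2 then updateProb G α (cfg r) p.1 else 1 - updateProb G α (cfg r) p.1

/-- The nodes whose last update set them to `1` against a strict `0`-majority of their neighbours.
Only the `α`-coin can make such an update, so these marks are dominated by independent
`α`-coins. -/
noncomputable def biasOnes : List (V × Bool) → V → Bool
  | [] => fun _ => false
  | p :: r => Function.update (biasOnes r) p.1
      (p.2 && decide (2 * neighborOnes G (cfg r) p.1 < G.degree p.1))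

def BiasMajorityAt (r : List (V × Bool)) (u : V) : Prop :=
  G.degree u ≤ 2 * neighborOnes G (biasOnes G r) u

variable {G α}

lemma majorityProb_eq_zero {c : V → Bool} {u : V} (h : 2 * neighborOnes G c u < G.degree u) :
    majorityProb G c u = 0 := by
  unfold majorityProb
  rw [if_neg (by unfold neighborOnes at h; omega), if_neg (by unfold neighborOnes at h; omega)]

lemma majorityProb_mem_Icc (c : V → Bool) (u : V) : majorityProb G c u ∈ Set.Icc 0 1 := by
  unfold majorityProb
  split_ifs <;> norm_num

lemma updateProb_nonneg (hα0 : 0 ≤ α) (c : V → Bool) (u : V) : 0 ≤ updateProb G α c u := by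
  obtain ⟨h0, h1⟩ := majorityProb_mem_Icc (G := G) c u
  unfold updateProb
  nlinarith

lemma updateProb_le_one (hα1 : α ≤ 1) (c : V → Bool) (u : V) :
    updateProb G α c u ≤ 1 := by
  obtain ⟨h0, h1⟩ := majorityProb_mem_Icc (G := G) c u
  unfold updateProb
  nlinarith

lemma stepProb_nonneg (hα0 : 0 ≤ α) (hα1 : α ≤ 1) (c c' : V → Bool) : 0 ≤ stepProb G α c c' := by
  unfold stepProb
  refine mul_nonneg (by positivity) (sum_nonneg fun u _ => ?_)
  have h0 := updateProb_nonneg (G := G) hα0 c u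
  have h1 := updateProb_le_one (G := G) hα1 c u
  unfold updateProb at h0 h1
  refine add_nonneg ?_ ?_ <;> split_ifs <;> linarith

lemma sum_stepProb_mul (c : V → Bool) (Φ : (V → Bool) → ℝ) :
    ∑ c', stepProb G α c c' * Φ c'
      = (Fintype.card V : ℝ)⁻¹ * ∑ u, (updateProb G α c u * Φ (Function.update c u true)
          + (1 - updateProb G α c u) * Φ (Function.update c u false)) := by
  simp only [stepProb, one_div, mul_assoc, ← mul_sum]
  congr 1
  simp only [sum_mul, add_mul, ite_mul, zero_mul]
  rw [sum_comm]
  refine sum_congr rfl fun u _ => ?_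
  rw [sum_add_distrib, sum_ite_eq', sum_ite_eq', if_pos (mem_univ _), if_pos (mem_univ _),
    updateProb]
  ring

lemma sum_stepWeight_mul (r : List (V × Bool)) (Φ : V × Bool → ℝ) :
    ∑ p, stepWeight G α r p * Φ p
      = (Fintype.card V : ℝ)⁻¹ * ∑ u, (updateProb G α (cfg r) u * Φ (u, true)
          + (1 - updateProb G α (cfg r) u) * Φ (u, false)) := by
  simp only [stepWeight, Fintype.sum_prod_type, Fintype.sum_bool, mul_sum, if_true,
    Bool.false_eq_true, if_false, mul_assoc, mul_add]

lemma stepWeight_nonneg (hα0 : 0 ≤ α) (hα1 : α ≤ 1) (r : List (V × Bool)) (p : V × Bool) :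
    0 ≤ stepWeight G α r p := by
  unfold stepWeight
  have := updateProb_le_one (G := G) hα1 (cfg r) p.1
  split_ifs
  · exact mul_nonneg (by positivity) (updateProb_nonneg hα0 _ _)
  · exact mul_nonneg (by positivity) (by linarith)

lemma sum_stepWeight [Nonempty V] (r : List (V × Bool)) : ∑ p, stepWeight G α r p = 1 := by
  simpa using sum_stepWeight_mul (G := G) (α := α) r fun _ => 1

lemma pathExp_stepProb_cfgs (k : ℕ) (F : List (V → Bool) → ℝ) (r : List (V × Bool)) :
    pathExp (fun h => stepProb G α h.headI) k F (cfgs r)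
      = pathExp (stepWeight G α) k (fun l => F (cfgs l)) r :=
  pathExp_map cfgs (fun r p => Function.update (cfg r) p.1 p.2) (fun r p => cfgs_cons p r)
    (fun r Φ => by rw [sum_stepWeight_mul, headI_cfgs, sum_stepProb_mul]) k F r

end Dynamics

section Marks

variable {V : Type*} [Fintype V] {G : SimpleGraph V} {α γ : ℝ}

variable (G) in
noncomputable def markWeight (γ : ℝ) (S : Finset V) (r : List (V × Bool)) : ℝ :=
  ∏ v ∈ S, if biasOnes G r v then γ else 1

lemma markWeight_nonneg (hγ : 0 ≤ γ) (S : Finset V) (r : List (V × Bool)) :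
    0 ≤ markWeight G γ S r :=
  prod_nonneg fun _ _ => by split_ifs <;> linarith

lemma markWeight_eq_pow (S : Finset V) (r : List (V × Bool)) :
    markWeight G γ S r = γ ^ #{v ∈ S | biasOnes G r v = true} := by
  rw [markWeight, prod_ite, prod_const, prod_const_one, mul_one]

lemma biasOnes_cons_of_ne {p : V × Bool} {v : V} (h : v ≠ p.1) (r : List (V × Bool)) :
    biasOnes G (p :: r) v = biasOnes G r v :=
  Function.update_of_ne h _ _

lemma markWeight_cons_of_notMem {S : Finset V} {u : V} (hu : u ∉ S) (b : Bool)
    (r : List (V × Bool)) : markWeight G γ S ((u, b) :: r) = markWeight G γ S r :=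
  prod_congr rfl fun _ hv => by rw [biasOnes_cons_of_ne (ne_of_mem_of_not_mem hv hu)]

lemma markWeight_cons_of_mem {S : Finset V} {u : V} (hu : u ∈ S) (b : Bool)
    (r : List (V × Bool)) :
    markWeight G γ S ((u, b) :: r)
      = (if biasOnes G ((u, b) :: r) u then γ else 1) * markWeight G γ (S.erase u) r := by
  rw [markWeight, ← mul_prod_erase S _ hu]
  exact congrArg _ (prod_congr rfl fun _ hv => by rw [biasOnes_cons_of_ne (ne_of_mem_erase hv)])

lemma expected_mark_le (hα0 : 0 ≤ α) (hγ : 1 ≤ γ) (r : List (V × Bool)) (u : V) :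
    updateProb G α (cfg r) u * (if biasOnes G ((u, true) :: r) u then γ else 1)
      + (1 - updateProb G α (cfg r) u) * (if biasOnes G ((u, false) :: r) u then γ else 1)
      ≤ α * γ + (1 - α) := by
  simp only [biasOnes, Function.update_self, Bool.true_and, Bool.false_and, decide_eq_true_eq,
    Bool.false_eq_true, if_false]
  by_cases h : 2 * neighborOnes G (cfg r) u < G.degree u
  · simp [h, updateProb, majorityProb_eq_zero h]
  · simp only [h, if_false]
    nlinarith

/-- The last step: an update outside `S` leaves the weight unchanged, and an update at `u ∈ S`
redraws the mark of `u`, which the `α`-coin sets with probability at most `α`. -/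
lemma sum_stepWeight_mul_markWeight_le (hα0 : 0 ≤ α) (hγ : 1 ≤ γ) (S : Finset V)
    (r : List (V × Bool)) :
    ∑ p, stepWeight G α r p * markWeight G γ S (p :: r)
      ≤ (Fintype.card V : ℝ)⁻¹ * ((Fintype.card V - #S) * markWeight G γ S r
          + (α * γ + (1 - α)) * ∑ u ∈ S, markWeight G γ (S.erase u) r) := by
  rw [sum_stepWeight_mul]
  refine mul_le_mul_of_nonneg_left ?_ (by positivity)
  rw [← sum_add_sum_compl S, add_comm]
  refine add_le_add (le_of_eq ?_) ?_
  · rw [← Nat.cast_sub (card_le_univ S), ← card_compl, ← nsmul_eq_mul, ← sum_const]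
    refine sum_congr rfl fun u hu => ?_
    rw [markWeight_cons_of_notMem (mem_compl.1 hu), markWeight_cons_of_notMem (mem_compl.1 hu)]
    ring
  · rw [mul_sum]
    refine sum_le_sum fun u hu => ?_
    rw [markWeight_cons_of_mem hu, markWeight_cons_of_mem hu, ← mul_assoc, ← mul_assoc, ← add_mul]
    exact mul_le_mul_of_nonneg_right (expected_mark_le hα0 hγ r u)
      (markWeight_nonneg (by linarith) _ _)

lemma pathExp_markWeight_le [Nonempty V] (hα0 : 0 ≤ α) (hα1 : α ≤ 1) (hγ : 1 ≤ γ) (k : ℕ)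
    (S : Finset V) : pathExp (stepWeight G α) k (markWeight G γ S) [] ≤ (α * γ + (1 - α)) ^ #S := by
  set β := α * γ + (1 - α)
  have hβ : 1 ≤ β := by nlinarith
  have hn : (0 : ℝ) < Fintype.card V := by exact_mod_cast Fintype.card_pos
  induction k generalizing S with
  | zero => simpa [pathExp_zero, markWeight, biasOnes] using one_le_pow₀ hβ
  | succ k ih =>
    have hS : (#S : ℝ) ≤ Fintype.card V := by exact_mod_cast card_le_univ S
    have hsum : β * ∑ _u ∈ S, β ^ (#S - 1) = #S * β ^ #S := by
      rcases Nat.eq_zero_or_pos #S with h | h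
      · simp [h]
      · rw [sum_const, nsmul_eq_mul, mul_left_comm, mul_pow_sub_one h.ne']
    calc pathExp (stepWeight G α) (k + 1) (markWeight G γ S) []
        ≤ pathExp (stepWeight G α) k (fun r => (Fintype.card V : ℝ)⁻¹ *
            ((Fintype.card V - #S) * markWeight G γ S r
              + β * ∑ u ∈ S, markWeight G γ (S.erase u) r)) [] := by
          rw [pathExp_succ']
          exact pathExp_mono (stepWeight_nonneg hα0 hα1) fun r _ =>
            sum_stepWeight_mul_markWeight_le hα0 hγ S r
      _ = (Fintype.card V : ℝ)⁻¹ * ((Fintype.card V - #S) *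
            pathExp (stepWeight G α) k (markWeight G γ S) []
              + β * ∑ u ∈ S, pathExp (stepWeight G α) k (markWeight G γ (S.erase u)) []) := by
          simp only [pathExp_const_mul, pathExp_add, pathExp_sum]
      _ ≤ (Fintype.card V : ℝ)⁻¹ * ((Fintype.card V - #S) * β ^ #S
              + β * ∑ _u ∈ S, β ^ (#S - 1)) := by
          refine mul_le_mul_of_nonneg_left (add_le_add
            (mul_le_mul_of_nonneg_left (ih S) (by linarith))
            (mul_le_mul_of_nonneg_left (sum_le_sum fun u hu => ?_) (by linarith))) (by positivity)
          rw [← card_erase_of_mem hu]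
          exact ih _
      _ = β ^ #S := by
          rw [hsum]
          field_simp
          ring

lemma pathExp_biasMajorityAt_le [Nonempty V] (hα0 : 0 ≤ α) (hα1 : α ≤ 1) {ρ : ℝ} (hρ : 1 ≤ ρ)
    (k : ℕ) (u : V) :
    pathExp (stepWeight G α) k (fun r => if BiasMajorityAt G r u then 1 else 0) []
      ≤ (α * ρ + (1 - α) / ρ) ^ G.degree u := by
  have hρ0 : 0 < ρ := by linarith
  have hind : ∀ r, (if BiasMajorityAt G r u then (1 : ℝ) else 0)
      ≤ (ρ ^ G.degree u)⁻¹ * markWeight G (ρ ^ 2) (G.neighborFinset u) r := by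
    intro r
    split_ifs with h
    · rw [markWeight_eq_pow, ← pow_mul, le_inv_mul_iff₀ (by positivity), mul_one]
      exact pow_le_pow_right₀ hρ h
    · exact mul_nonneg (by positivity) (markWeight_nonneg (by positivity) _ _)
  calc _ ≤ pathExp (stepWeight G α) k
        (fun r => (ρ ^ G.degree u)⁻¹ * markWeight G (ρ ^ 2) (G.neighborFinset u) r) [] :=
        pathExp_mono (stepWeight_nonneg hα0 hα1) fun r _ => hind r
    _ = (ρ ^ G.degree u)⁻¹ *
          pathExp (stepWeight G α) k (markWeight G (ρ ^ 2) (G.neighborFinset u)) [] :=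
        pathExp_const_mul _ _ _ _
    _ ≤ (ρ ^ G.degree u)⁻¹ * (α * ρ ^ 2 + (1 - α)) ^ G.degree u := by
        gcongr
        simpa using pathExp_markWeight_le hα0 hα1 (one_le_pow₀ hρ) k (G.neighborFinset u)
    _ = _ := by
        rw [show α * ρ + (1 - α) / ρ = (α * ρ ^ 2 + (1 - α)) / ρ by field_simp, div_pow,
          div_eq_inv_mul]

/-- `√((1 - α) / α)` minimizes `α * ρ + (1 - α) / ρ`, with minimum `2 √(α (1 - α))`. -/
lemma mul_sqrt_add_div_sqrt_le_exp {ε : ℝ} (hα0 : 0 < α) (hε : 0 ≤ ε) (hα : α ≤ (1 - ε) / 2) :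
    α * √((1 - α) / α) + (1 - α) / √((1 - α) / α) ≤ Real.exp (-(ε ^ 2 / 6)) := by
  have hpos : 0 < (1 - α) / α := div_pos (by linarith) hα0
  set ρ := √((1 - α) / α)
  have hρ : 0 < ρ := Real.sqrt_pos.2 hpos
  have hρsq : ρ ^ 2 = (1 - α) / α := Real.sq_sqrt hpos.le
  have hnonneg : 0 ≤ α * ρ + (1 - α) / ρ := by
    have : 0 ≤ (1 - α) / ρ := div_nonneg (by linarith) hρ.le
    positivity
  have hsq : (α * ρ + (1 - α) / ρ) ^ 2 = 4 * α * (1 - α) := by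
    field_simp
    rw [hρsq]
    field_simp
    ring
  rw [← pow_le_pow_iff_left₀ hnonneg (Real.exp_pos _).le two_ne_zero, hsq,
    ← Real.exp_nat_mul]
  calc 4 * α * (1 - α) ≤ 1 - ε ^ 2 := by nlinarith
    _ ≤ Real.exp (-ε ^ 2) := by linarith [Real.add_one_le_exp (-ε ^ 2)]
    _ ≤ _ := Real.exp_le_exp.2 (by push_cast; nlinarith [sq_nonneg ε])

lemma pathExp_biasMajorityAt_le_exp [Nonempty V] {ε : ℝ} (hα0 : 0 < α) (hε : 0 ≤ ε)
    (hα : α ≤ (1 - ε) / 2) {Δ : ℕ} {u : V} (hΔ : Δ ≤ G.degree u) (k : ℕ) :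
    pathExp (stepWeight G α) k (fun r => if BiasMajorityAt G r u then 1 else 0) []
      ≤ Real.exp (-(ε ^ 2 * Δ / 6)) := by
  have hρ : 1 ≤ √((1 - α) / α) := Real.one_le_sqrt.2 (by rw [le_div_iff₀ hα0]; linarith)
  calc _ ≤ (α * √((1 - α) / α) + (1 - α) / √((1 - α) / α)) ^ G.degree u :=
        pathExp_biasMajorityAt_le hα0.le (by linarith) hρ k u
    _ ≤ Real.exp (-(ε ^ 2 / 6)) ^ G.degree u :=
        pow_le_pow_left₀ (add_nonneg (by positivity) (div_nonneg (by linarith) (by positivity)))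
          (mul_sqrt_add_div_sqrt_le_exp hα0 hε hα) _
    _ ≤ _ := by
        rw [← Real.exp_nat_mul]
        refine Real.exp_le_exp.2 ?_
        have : (Δ : ℝ) ≤ G.degree u := by exact_mod_cast hΔ
        nlinarith [sq_nonneg ε]

end Marks

section Hitting

variable {V : Type*} [Fintype V] {G : SimpleGraph V} {α : ℝ}

/-- While no node ever had a marked majority of neighbours, majority updates cannot create a
`1`, so every `1` of the configuration is a mark. -/
lemma biasOnes_of_cfg {l : List (V × Bool)} (hl : ∀ m, m <:+ l → ∀ u, ¬ BiasMajorityAt G m u)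
    {v : V} (hv : cfg l v = true) : biasOnes G l v = true := by
  induction l generalizing v with
  | nil => simp [cfg] at hv
  | cons p l ih =>
    have hl' : ∀ m, m <:+ l → ∀ u, ¬ BiasMajorityAt G m u :=
      fun m hm => hl m (hm.trans (List.suffix_cons p l))
    by_cases hvp : v = p.1
    · subst hvp
      have hp : p.2 = true := by simpa [cfg] using hv
      simp only [biasOnes, Function.update_self, hp, Bool.true_and, decide_eq_true_eq]
      by_contra hge
      refine hl l (List.suffix_cons p l) p.1 ((not_lt.1 hge).trans ?_)
      exact Nat.mul_le_mul_left 2 (card_le_card fun w hw => by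
        simp only [mem_filter] at hw ⊢
        exact ⟨hw.1, ih hl' hw.2⟩)
    · rw [cfg, Function.update_of_ne hvp] at hv
      rw [biasOnes, Function.update_of_ne hvp]
      exact ih hl' hv

lemma exists_biasMajorityAt_of_mem_cfgs [Nonempty V] {l : List (V × Bool)}
    (h : (fun _ => true) ∈ cfgs l) : ∃ m, m <:+ l ∧ ∃ u, BiasMajorityAt G m u := by
  by_contra hno
  push Not at hno
  obtain ⟨m, hm, hcfg⟩ := List.mem_map.1 h
  rw [List.mem_tails] at hm
  obtain ⟨u⟩ := ‹Nonempty V›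
  refine hno m hm u ?_
  have hall : neighborOnes G (biasOnes G m) u = G.degree u := by
    rw [neighborOnes, filter_true_of_mem fun v _ =>
      biasOnes_of_cfg (fun m' hm' => hno m' (hm'.trans hm)) (by rw [hcfg]),
      SimpleGraph.card_neighborFinset_eq_degree]
  rw [BiasMajorityAt, hall]
  omega

lemma indicator_hit_le_sum [Nonempty V] (l : List (V × Bool)) :
    {h : List (V → Bool) | (fun _ => true) ∈ h}.indicator 1 (cfgs l)
      ≤ ∑ i ∈ range (l.length + 1), ∑ u, if BiasMajorityAt G (l.drop i) u then (1 : ℝ) else 0 := by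
  have hnn : ∀ i ∈ range (l.length + 1),
      0 ≤ ∑ u, if BiasMajorityAt G (l.drop i) u then (1 : ℝ) else 0 :=
    fun i _ => sum_nonneg fun u _ => by positivity
  by_cases h : (fun _ => true) ∈ cfgs l
  · obtain ⟨m, hm, u, hu⟩ := exists_biasMajorityAt_of_mem_cfgs (G := G) h
    have hdrop : l.drop (l.length - m.length) = m := (List.suffix_iff_eq_drop.1 hm).symm
    rw [Set.indicator_of_mem (s := {h : List (V → Bool) | (fun _ => true) ∈ h}) h, Pi.one_apply]
    calc (1 : ℝ) = if BiasMajorityAt G (l.drop (l.length - m.length)) u then 1 else 0 := by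
          rw [hdrop, if_pos hu]
      _ ≤ ∑ u', if BiasMajorityAt G (l.drop (l.length - m.length)) u' then (1 : ℝ) else 0 :=
          single_le_sum (f := fun u' =>
            if BiasMajorityAt G (l.drop (l.length - m.length)) u' then (1 : ℝ) else 0)
            (fun _ _ => by positivity) (mem_univ u)
      _ ≤ _ := single_le_sum hnn (mem_range.2 (by omega))
  · rw [Set.indicator_of_notMem (s := {h : List (V → Bool) | (fun _ => true) ∈ h}) h]
    exact sum_nonneg hnn

lemma pathExp_hit_le [Nonempty V] {ε : ℝ} (hα0 : 0 < α) (hε : 0 ≤ ε) (hα : α ≤ (1 - ε) / 2)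
    {Δ : ℕ} (hΔ : ∀ v, Δ ≤ G.degree v) (t : ℕ) :
    pathExp (fun h => stepProb G α h.headI) t ({h | (fun _ => true) ∈ h}.indicator 1)
        [fun _ => false]
      ≤ (t + 1) * Fintype.card V * Real.exp (-(ε ^ 2 * Δ / 6)) := by
  have hα1 : α ≤ 1 := by linarith
  rw [show [fun _ => false] = cfgs ([] : List (V × Bool)) from rfl, pathExp_stepProb_cfgs]
  calc _ ≤ pathExp (stepWeight G α) t (fun l => ∑ i ∈ range (t + 1), ∑ u,
        if BiasMajorityAt G (l.drop i) u then (1 : ℝ) else 0) [] :=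
        pathExp_mono (stepWeight_nonneg hα0.le hα1) fun l hl => by
          simpa [hl] using indicator_hit_le_sum (G := G) l
    _ = ∑ i ∈ range (t + 1), ∑ u, pathExp (stepWeight G α) (t - i)
          (fun r => if BiasMajorityAt G r u then (1 : ℝ) else 0) [] := by
        simp only [pathExp_sum]
        exact sum_congr rfl fun i hi => sum_congr rfl fun u _ =>
          pathExp_drop sum_stepWeight (Nat.lt_succ_iff.1 (mem_range.1 hi))
            (fun r => if BiasMajorityAt G r u then (1 : ℝ) else 0) []
    _ ≤ ∑ _i ∈ range (t + 1), ∑ _u : V, Real.exp (-(ε ^ 2 * Δ / 6)) :=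
        sum_le_sum fun i _ => sum_le_sum fun u _ =>
          pathExp_biasMajorityAt_le_exp hα0 hε hα (hΔ u) _
    _ = _ := by
        simp only [sum_const, card_range, card_univ, nsmul_eq_mul]
        push_cast
        ring

end Hitting

open scoped ENNReal in
lemma ofReal_div_six_le_tsum {p : ℕ → ℝ≥0∞} {y : ℝ} (hp0 : 1 ≤ p 0)
    (hp : ∀ t : ℕ, 1 - ENNReal.ofReal ((t + 1) / y) ≤ p t) :
    ENNReal.ofReal (y / 6) ≤ ∑' t, p t := by
  rcases lt_or_ge y 6 with hy | hy
  · exact (ENNReal.ofReal_le_one.2 (by linarith)).trans (hp0.trans (ENNReal.le_tsum 0))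
  set T := ⌊y / 2⌋₊
  have hT : y / 2 < T + 1 := Nat.lt_floor_add_one _
  have hhalf : ∀ t ∈ range T, ENNReal.ofReal (1 / 2) ≤ p t := by
    intro t ht
    have htT : (t : ℝ) + 1 ≤ T := by exact_mod_cast mem_range.1 ht
    have hTy : (T : ℝ) ≤ y / 2 := Nat.floor_le (by linarith)
    have hquot : ((t : ℝ) + 1) / y ≤ 1 / 2 := by
      rw [div_le_iff₀ (by linarith)]
      linarith
    calc ENNReal.ofReal (1 / 2) ≤ ENNReal.ofReal (1 - (t + 1) / y) :=
          ENNReal.ofReal_le_ofReal (by linarith)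
      _ = 1 - ENNReal.ofReal ((t + 1) / y) := by
          rw [ENNReal.ofReal_sub _ (by positivity), ENNReal.ofReal_one]
      _ ≤ p t := hp t
  calc ENNReal.ofReal (y / 6) ≤ ENNReal.ofReal (T * (1 / 2)) :=
        ENNReal.ofReal_le_ofReal (by linarith)
    _ = #(range T) • ENNReal.ofReal (1 / 2) := by
        rw [ENNReal.ofReal_mul (by positivity), ENNReal.ofReal_natCast, card_range, nsmul_eq_mul]
    _ ≤ ∑ t ∈ range T, p t := card_nsmul_le_sum _ _ _ hhalf
    _ ≤ ∑' t, p t := ENNReal.sum_le_tsum _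

end BiasedMajority

open BiasedMajority

theorem stmt_15_general {Ω : Type*} [MeasurableSpace Ω] (μ : Measure Ω) [IsProbabilityMeasure μ]
    {V : Type*} [Fintype V] [Nonempty V] (G : SimpleGraph V)
    (Δ : ℕ) (hΔ : ∀ v : V, Δ ≤ G.degree v)
    (ε : ℝ) (hε0 : 0 < ε)
    (α : ℝ) (hα0 : 0 < α) (hα : α ≤ (1 - ε) / 2)
    (X : ℕ → Ω → (V → Bool))
    (hstart : ∀ᵐ ω ∂μ, X 0 ω = fun _ => false)
    (hstep : ∀ (t : ℕ) (f : ℕ → V → Bool) (c' : V → Bool),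
      μ {ω | X (t + 1) ω = c' ∧ ∀ s ≤ t, X s ω = f s}
        = ENNReal.ofReal (stepProb G α (f t) c') * μ {ω | ∀ s ≤ t, X s ω = f s}) :
    ENNReal.ofReal (Real.exp (ε ^ 2 * Δ / 6) / (6 * Fintype.card V))
      ≤ ∑' t : ℕ, μ {ω | ∀ s ≤ t, X s ω ≠ fun _ => true} := by
  have hn : (0 : ℝ) < Fintype.card V := by exact_mod_cast Fintype.card_pos
  obtain ⟨y, hy⟩ : ∃ y, y = Real.exp (ε ^ 2 * Δ / 6) / Fintype.card V := ⟨_, rfl⟩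
  have hhit : ∀ t : ℕ, μ {ω | ∃ s ≤ t, X s ω = fun _ => true} ≤ ENNReal.ofReal ((t + 1) / y) := by
    intro t
    have hevent : {ω | ∃ s ≤ t, X s ω = fun _ => true}
        = {ω | history t (X · ω) ∈ {h | (fun _ => true) ∈ h}} := by
      ext ω
      simp [mem_history]
    rw [hevent]
    refine (measure_history_mem_le (stepProb_nonneg hα0.le (by linarith)) hstep hstart _ t).trans
      (ENNReal.ofReal_le_ofReal ((pathExp_hit_le hα0 hε0.le hα hΔ t).trans_eq ?_))
    rw [hy, Real.exp_neg]
    field_simp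
  rw [show Real.exp (ε ^ 2 * Δ / 6) / (6 * Fintype.card V) = y / 6 by
    rw [hy, div_div, mul_comm (6 : ℝ)]]
  refine ofReal_div_six_le_tsum ?_ fun t => ?_
  · rw [← measure_univ (μ := μ)]
    refine measure_mono_ae (hstart.mono fun ω h _ s hs he => ?_)
    rw [Nat.le_zero.1 hs, h] at he
    simpa using congrFun he (Classical.arbitrary V)
  · refine (tsub_le_tsub_left (hhit t) 1).trans ?_
    rw [← measure_univ (μ := μ)]
    exact le_measure_sdiff.trans (measure_mono fun ω hω s hs hX => hω.2 ⟨s, hs, hX⟩)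

/-- Biased majority dynamics on a graph with minimum degree `Δ`, bias
`0 < α ≤ (1-ε)/2`, started from all zeros: the expected absorption time to the
all-ones configuration (written as `∑ₜ P(τ > t)`) is at least `e^{ε²Δ/6}/(6n)`. -/
theorem stmt_15 {Ω : Type*} [MeasurableSpace Ω] (μ : Measure Ω) [IsProbabilityMeasure μ]
    {V : Type*} [Fintype V] [Nonempty V] (G : SimpleGraph V)
    (Δ : ℕ) (hΔ : ∀ v : V, Δ ≤ G.degree v)
    (ε : ℝ) (hε0 : 0 < ε) (hε1 : ε < 1)
    (α : ℝ) (hα0 : 0 < α) (hα : α ≤ (1 - ε) / 2)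
    (X : ℕ → Ω → (V → Bool))
    (hstart : ∀ᵐ ω ∂μ, X 0 ω = fun _ => false)
    (hstep : ∀ (t : ℕ) (f : ℕ → V → Bool) (c' : V → Bool),
      μ {ω | X (t + 1) ω = c' ∧ ∀ s ≤ t, X s ω = f s}
        = ENNReal.ofReal (stepProb G α (f t) c') * μ {ω | ∀ s ≤ t, X s ω = f s}) :
    ENNReal.ofReal (Real.exp (ε ^ 2 * Δ / 6) / (6 * Fintype.card V))
      ≤ ∑' t : ℕ, μ {ω | ∀ s ≤ t, X s ω ≠ fun _ => true} :=
  stmt_15_general μ G Δ hΔ ε hε0 α hα0 hα X hstart hstep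
end

section
/- Let G = C_n be the cycle on n ≥ 3 nodes and run the biased majority dynamics with bias α ∈ (0,1] from the all-zeros configuration. Then with probability at least 1 - 1/n, the absorption time τ satisfies τ ≤ (2/α) n log n. -/
open MeasureTheory Finset
open scoped Classical

/-- The cycle on `n` nodes, with vertex set `ZMod n` and edges `{u, u+1}`. -/
def cycleGraph (n : ℕ) : SimpleGraph (ZMod n) :=
  SimpleGraph.fromRel (fun u v => v = u + 1)

/-!
Let `Z_t` be the number of zeros of `X t`. A step resamples a uniform node: a zero disappears
with probability `1 / n`, and a one at `u` is replaced by a zero with probability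
`(1 - α)(1 - majorityProb c u) / n`. On the cycle `∑ u, majorityProb c u` is the number of ones,
since every one is counted half by each of its two neighbours, so the expected number of new
zeros is `(1 - α) Z_t / n` and `E[Z_{t+1} | past] = (1 - α / n) Z_t`. Markov's inequality gives
`P(X_t ≠ 1) ≤ E[Z_t] = n (1 - α / n) ^ t`, which is at most `1 / n` at `t = ⌊(2/α) n log n⌋`.
As `X` is not assumed measurable, expectations are replaced by sums over path cylinders, for
which subadditivity of the outer measure is enough.
-/

open scoped ENNReal

section PotentialBound

variable {Ω C : Type*} [MeasurableSpace Ω] {μ : Measure Ω} {X : ℕ → Ω → C}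

def IsMarkovWith (μ : Measure Ω) (X : ℕ → Ω → C) (P : C → C → ℝ) : Prop :=
  ∀ (t : ℕ) (f : ℕ → C) (c' : C),
    μ {ω | X (t + 1) ω = c' ∧ ∀ s ≤ t, X s ω = f s}
      = ENNReal.ofReal (P (f t) c') * μ {ω | ∀ s ≤ t, X s ω = f s}

def pathCylinder (X : ℕ → Ω → C) (t : ℕ) (f : ℕ → C) : Set Ω := {ω | ∀ s ≤ t, X s ω = f s}

lemma IsMarkovWith.measure_pathCylinder_succ {P : C → C → ℝ} (hX : IsMarkovWith μ X P)
    (t : ℕ) (g : ℕ → C) (c : C) :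
    μ (pathCylinder X (t + 1) fun s => if s ≤ t then g s else c)
      = ENNReal.ofReal (P (g t) c) * μ (pathCylinder X t g) := by
  have hcyl : (pathCylinder X (t + 1) fun s => if s ≤ t then g s else c)
      = {ω | X (t + 1) ω = c ∧ ∀ s ≤ t, X s ω = if s ≤ t then g s else c} := by
    ext ω
    refine ⟨fun h => ⟨by simpa using h (t + 1) le_rfl, fun s hs => h s (Nat.le_succ_of_le hs)⟩,
      fun ⟨hlast, hpast⟩ s hs => ?_⟩
    rcases Nat.of_le_succ hs with hs | rfl
    · exact hpast s hs
    · simpa using hlast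
  have hpast : {ω | ∀ s ≤ t, X s ω = if s ≤ t then g s else c} = pathCylinder X t g := by
    ext ω
    exact forall₂_congr fun s hs => by rw [if_pos hs]
  rw [hcyl, hX, if_pos le_rfl, hpast]

variable [Fintype C]

/-- Paths that are constant from time `t` on. -/
noncomputable def pathsUpTo (C : Type*) [Fintype C] : ℕ → Finset (ℕ → C)
  | 0 => univ.image fun c _ => c
  | t + 1 => (pathsUpTo C t ×ˢ univ).image fun p s => if s ≤ t then p.1 s else p.2

lemma comp_min_mem_pathsUpTo (h : ℕ → C) (t : ℕ) :
    (fun s => h (min s t)) ∈ pathsUpTo C t := by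
  induction t with
  | zero => exact mem_image.2 ⟨h 0, mem_univ _, by simp⟩
  | succ t ih =>
    refine mem_image.2 ⟨(_, h (t + 1)), mem_product.2 ⟨ih, mem_univ _⟩, funext fun s => ?_⟩
    by_cases hs : s ≤ t
    · simp [hs, Nat.le_succ_of_le hs]
    · simp [hs, show t + 1 ≤ s by omega]

/-- The expectation of `φ (X t)`, computed path by path. The sets `pathCylinder X t f` need not
be measurable, so this is only an upper bound for it. -/
noncomputable def pathExpectation (μ : Measure Ω) (X : ℕ → Ω → C) (φ : C → ℝ≥0∞) (t : ℕ) :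
    ℝ≥0∞ :=
  ∑ f ∈ pathsUpTo C t, μ (pathCylinder X t f) * φ (f t)

lemma measure_one_le_le_pathExpectation (φ : C → ℝ≥0∞) (t : ℕ) :
    μ {ω | 1 ≤ φ (X t ω)} ≤ pathExpectation μ X φ t := by
  let S := (pathsUpTo C t).filter fun f => 1 ≤ φ (f t)
  have hcover : {ω | 1 ≤ φ (X t ω)} ⊆ ⋃ f ∈ S, pathCylinder X t f := by
    intro ω hω
    refine Set.mem_biUnion (x := fun s => X (min s t) ω)
      (mem_filter.2 ⟨comp_min_mem_pathsUpTo (fun s => X s ω) t, by simpa using hω⟩) ?_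
    intro s hs
    simp [min_eq_left hs]
  calc μ {ω | 1 ≤ φ (X t ω)} ≤ ∑ f ∈ S, μ (pathCylinder X t f) :=
        (measure_mono hcover).trans (measure_biUnion_finset_le _ _)
    _ ≤ ∑ f ∈ S, μ (pathCylinder X t f) * φ (f t) :=
        sum_le_sum fun f hf => le_mul_of_one_le_right' (mem_filter.1 hf).2
    _ ≤ pathExpectation μ X φ t := sum_le_sum_of_subset (filter_subset _ _)

lemma pathExpectation_zero_le [IsProbabilityMeasure μ] {c₀ : C}
    (hstart : ∀ᵐ ω ∂μ, X 0 ω = c₀) (φ : C → ℝ≥0∞) :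
    pathExpectation μ X φ 0 ≤ φ c₀ := by
  have hnull : ∀ c ≠ c₀, μ (pathCylinder X 0 fun _ => c) = 0 := fun c hc =>
    measure_mono_null (fun ω hω (h0 : X 0 ω = c₀) => hc (by rw [← h0, hω 0 le_rfl]))
      (ae_iff.1 hstart)
  calc pathExpectation μ X φ 0 ≤ ∑ c, μ (pathCylinder X 0 fun _ => c) * φ c :=
        sum_image_le_of_nonneg fun _ _ => zero_le
    _ = μ (pathCylinder X 0 fun _ => c₀) * φ c₀ :=
        sum_eq_single c₀ (fun c _ hc => by rw [hnull c hc, zero_mul]) (by simp)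
    _ ≤ φ c₀ := mul_le_of_le_one_left' prob_le_one

lemma IsMarkovWith.pathExpectation_succ_le {P : C → C → ℝ} (hX : IsMarkovWith μ X P)
    {φ : C → ℝ≥0∞} {r : ℝ≥0∞} (hdrift : ∀ c, ∑ c', ENNReal.ofReal (P c c') * φ c' ≤ r * φ c)
    (t : ℕ) :
    pathExpectation μ X φ (t + 1) ≤ r * pathExpectation μ X φ t := by
  calc pathExpectation μ X φ (t + 1)
      ≤ ∑ g ∈ pathsUpTo C t, ∑ c,
          ENNReal.ofReal (P (g t) c) * μ (pathCylinder X t g) * φ c := by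
        refine (sum_image_le_of_nonneg fun _ _ => zero_le).trans_eq ?_
        rw [sum_product]
        refine sum_congr rfl fun g _ => sum_congr rfl fun c _ => ?_
        simp only [hX.measure_pathCylinder_succ, if_neg (Nat.not_succ_le_self t)]
    _ ≤ ∑ g ∈ pathsUpTo C t, μ (pathCylinder X t g) * (r * φ (g t)) := by
        refine sum_le_sum fun g _ => ?_
        simp only [mul_comm _ (μ _), mul_assoc, ← mul_sum]
        gcongr
        exact hdrift (g t)
    _ = r * pathExpectation μ X φ t := by
        rw [pathExpectation, mul_sum]
        exact sum_congr rfl fun g _ => by ring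

theorem IsMarkovWith.measure_one_le_potential_le [IsProbabilityMeasure μ] {P : C → C → ℝ}
    (hX : IsMarkovWith μ X P) {c₀ : C} (hstart : ∀ᵐ ω ∂μ, X 0 ω = c₀)
    {φ : C → ℝ≥0∞} {r : ℝ≥0∞} (hdrift : ∀ c, ∑ c', ENNReal.ofReal (P c c') * φ c' ≤ r * φ c)
    (t : ℕ) :
    μ {ω | 1 ≤ φ (X t ω)} ≤ r ^ t * φ c₀ := by
  refine (measure_one_le_le_pathExpectation φ t).trans ?_
  induction t with
  | zero => simpa using pathExpectation_zero_le hstart φ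
  | succ t ih =>
    calc pathExpectation μ X φ (t + 1) ≤ r * pathExpectation μ X φ t :=
          hX.pathExpectation_succ_le hdrift t
      _ ≤ r ^ (t + 1) * φ c₀ := by
          rw [pow_succ', mul_assoc]
          gcongr

end PotentialBound

section MajorityDynamics

variable {V : Type*} [Fintype V]

lemma majorityProb_nonneg (G : SimpleGraph V) (c : V → Bool) (u : V) :
    0 ≤ majorityProb G c u := by
  unfold majorityProb; split_ifs <;> norm_num

lemma majorityProb_le_one (G : SimpleGraph V) (c : V → Bool) (u : V) :
    majorityProb G c u ≤ 1 := by
  unfold majorityProb; split_ifs <;> norm_num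

lemma stepProb_nonneg (G : SimpleGraph V) {α : ℝ} (hα0 : 0 ≤ α) (hα1 : α ≤ 1)
    (c c' : V → Bool) : 0 ≤ stepProb G α c c' := by
  have hm0 := majorityProb_nonneg G c
  have hm1 := majorityProb_le_one G c
  unfold stepProb
  refine mul_nonneg (by positivity) (sum_nonneg fun u _ => ?_)
  apply add_nonneg <;> split_ifs <;> nlinarith [hm0 u, hm1 u]

lemma sum_stepProb_mul (G : SimpleGraph V) (α : ℝ) (c : V → Bool) (g : (V → Bool) → ℝ) :
    ∑ c', stepProb G α c c' * g c'
      = (∑ u, ((α + (1 - α) * majorityProb G c u) * g (Function.update c u true)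
          + (1 - (α + (1 - α) * majorityProb G c u)) * g (Function.update c u false)))
        / Fintype.card V := by
  simp only [stepProb, mul_assoc, ← mul_sum, sum_mul]
  rw [sum_comm]
  simp only [add_mul, ite_mul, zero_mul, sum_add_distrib, sum_ite_eq', mem_univ, if_true]
  rw [one_div_mul_eq_div]

noncomputable def zeroCount (c : V → Bool) : ℝ := ∑ v, if c v then 0 else 1

lemma zeroCount_update (c : V → Bool) (u : V) (b : Bool) :
    zeroCount (Function.update c u b)
      = zeroCount c - (if c u then 0 else 1) + (if b then 0 else 1) := by
  unfold zeroCount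
  rw [← sum_erase_add _ _ (mem_univ u),
    ← sum_erase_add _ (fun v => if c v then (0 : ℝ) else 1) (mem_univ u), Function.update_self]
  rw [sum_congr rfl fun v hv => by rw [Function.update_of_ne (ne_of_mem_erase hv)]]
  ring

lemma zeroCount_nonneg (c : V → Bool) : 0 ≤ zeroCount c :=
  sum_nonneg fun v _ => by split_ifs <;> norm_num

lemma one_le_zeroCount {c : V → Bool} (hc : c ≠ fun _ => true) : 1 ≤ zeroCount c := by
  obtain ⟨v, hv⟩ : ∃ v, c v = false := by
    by_contra! h
    exact hc (funext fun v => by simpa using h v)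
  have hterm (w : V) : 0 ≤ (if c w then 0 else 1 : ℝ) := by split_ifs <;> norm_num
  unfold zeroCount
  simpa [hv] using single_le_sum (fun w _ => hterm w) (mem_univ v)

lemma zeroCount_const_false : zeroCount (fun _ : V => false) = Fintype.card V := by
  simp [zeroCount]

lemma sum_ite_true_eq_card_sub_zeroCount (c : V → Bool) :
    ∑ v, (if c v then 1 else 0 : ℝ) = Fintype.card V - zeroCount c := by
  rw [zeroCount, eq_sub_iff_add_eq, ← sum_add_distrib]
  simp [apply_ite₂ (· + ·)]

lemma sum_stepProb_mul_zeroCount (G : SimpleGraph V) (α : ℝ) (c : V → Bool) :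
    ∑ c', stepProb G α c c' * zeroCount c'
      = zeroCount c
        - (zeroCount c - (1 - α) * (Fintype.card V - ∑ u, majorityProb G c u))
          / Fintype.card V := by
  rcases isEmpty_or_nonempty V with hV | hV
  · simp [zeroCount]
  have hV0 : (Fintype.card V : ℝ) ≠ 0 := Nat.cast_ne_zero.2 Fintype.card_ne_zero
  have hstep (u : V) :
      (α + (1 - α) * majorityProb G c u) * zeroCount (Function.update c u true)
        + (1 - (α + (1 - α) * majorityProb G c u)) * zeroCount (Function.update c u false)
      = zeroCount c + (1 - α) - (if c u then 0 else 1) - (1 - α) * majorityProb G c u := by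
    simp only [zeroCount_update, if_true, Bool.false_eq_true, if_false]
    ring
  simp only [sum_stepProb_mul, hstep, sum_sub_distrib, sum_const, card_univ, nsmul_eq_mul,
    ← mul_sum]
  rw [← zeroCount]
  field_simp
  ring

end MajorityDynamics

lemma one_sub_div_natCast_nonneg (n : ℕ) [NeZero n] {α : ℝ} (hα1 : α ≤ 1) : 0 ≤ 1 - α / n :=
  sub_nonneg.2 (div_le_one_of_le₀ (hα1.trans (by exact_mod_cast NeZero.one_le)) n.cast_nonneg)

section Cycle

variable {n : ℕ}

lemma ZMod.natCast_ne_zero_of_pos_of_lt {k : ℕ} (hk : 0 < k) (hkn : k < n) :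
    (k : ZMod n) ≠ 0 := by
  rw [Ne, ZMod.natCast_eq_zero_iff]
  exact fun h => absurd (Nat.le_of_dvd hk h) (by omega)

variable [NeZero n]

lemma cycleGraph_neighborFinset (hn : 3 ≤ n) (u : ZMod n) :
    (cycleGraph n).neighborFinset u = {u + 1, u - 1} := by
  have h1 : (1 : ZMod n) ≠ 0 := by
    exact_mod_cast ZMod.natCast_ne_zero_of_pos_of_lt one_pos (by omega)
  ext v
  rw [SimpleGraph.mem_neighborFinset, cycleGraph, SimpleGraph.fromRel_adj, mem_insert,
    mem_singleton]
  constructor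
  · rintro ⟨-, rfl | rfl⟩
    · exact Or.inl rfl
    · exact Or.inr (by ring)
  · rintro (rfl | rfl)
    · exact ⟨fun h => h1 (by linear_combination -h), Or.inl rfl⟩
    · exact ⟨fun h => h1 (by linear_combination h), Or.inr (by ring)⟩

lemma majorityProb_cycleGraph (hn : 3 ≤ n) (c : ZMod n → Bool) (u : ZMod n) :
    majorityProb (cycleGraph n) c u
      = ((if c (u + 1) then 1 else 0) + (if c (u - 1) then 1 else 0)) / 2 := by
  have h2 : (2 : ZMod n) ≠ 0 := by
    exact_mod_cast ZMod.natCast_ne_zero_of_pos_of_lt two_pos (by omega)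
  have hne : u + 1 ≠ u - 1 := fun h => h2 (by linear_combination h)
  have hdeg : (cycleGraph n).degree u = 2 := by
    rw [← SimpleGraph.card_neighborFinset_eq_degree, cycleGraph_neighborFinset hn,
      card_pair hne]
  rw [majorityProb, hdeg, cycleGraph_neighborFinset hn, filter_insert, filter_singleton]
  cases c (u + 1) <;> cases c (u - 1) <;> simp [hne]

lemma sum_majorityProb_cycleGraph (hn : 3 ≤ n) (c : ZMod n → Bool) :
    ∑ u, majorityProb (cycleGraph n) c u = n - zeroCount c := by
  have hshift (a : ZMod n) : ∑ u, (if c (u + a) then 1 else 0 : ℝ) = n - zeroCount c := by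
    have hcount := sum_ite_true_eq_card_sub_zeroCount c
    rw [ZMod.card] at hcount
    rw [← hcount]
    exact Equiv.sum_comp (Equiv.addRight a) fun u => if c u then (1 : ℝ) else 0
  simp only [majorityProb_cycleGraph hn, sub_eq_add_neg (G := ZMod n), ← sum_div,
    sum_add_distrib, hshift]
  ring

lemma sum_stepProb_cycleGraph_mul_zeroCount (hn : 3 ≤ n) (α : ℝ) (c : ZMod n → Bool) :
    ∑ c', stepProb (cycleGraph n) α c c' * zeroCount c' = (1 - α / n) * zeroCount c := by
  have hn0 : (n : ℝ) ≠ 0 := Nat.cast_ne_zero.2 (NeZero.ne n)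
  have hdrift := sum_stepProb_mul_zeroCount (cycleGraph n) α c
  rw [sum_majorityProb_cycleGraph hn, ZMod.card] at hdrift
  -- `hdrift` sums over `univ` built from the classical `DecidableEq (ZMod n)` used in `stepProb`
  convert hdrift using 1
  · congr 1
    ext
    simp
  field_simp
  ring

lemma sum_ofReal_stepProb_cycleGraph_mul_zeroCount (hn : 3 ≤ n) {α : ℝ} (hα0 : 0 ≤ α)
    (hα1 : α ≤ 1) (c : ZMod n → Bool) :
    ∑ c', ENNReal.ofReal (stepProb (cycleGraph n) α c c') * ENNReal.ofReal (zeroCount c')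
      = ENNReal.ofReal (1 - α / n) * ENNReal.ofReal (zeroCount c) := by
  have hrate := one_sub_div_natCast_nonneg n hα1
  simp_rw [← ENNReal.ofReal_mul (stepProb_nonneg _ hα0 hα1 _ _)]
  rw [← ENNReal.ofReal_sum_of_nonneg fun c' _ =>
      mul_nonneg (stepProb_nonneg _ hα0 hα1 _ _) (zeroCount_nonneg c'),
    sum_stepProb_cycleGraph_mul_zeroCount hn, ENNReal.ofReal_mul hrate]

end Cycle

lemma add_sq_div_two_add_pow_three_div_three_le_neg_log_one_sub {x : ℝ} (h0 : 0 ≤ x)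
    (h1 : x < 1) : x + x ^ 2 / 2 + x ^ 3 / 3 ≤ -Real.log (1 - x) := by
  have hsum := Real.hasSum_pow_div_log_of_abs_lt_one (by rwa [abs_of_nonneg h0])
  have := sum_le_hasSum (range 3) (fun i _ => by positivity) hsum
  norm_num [sum_range_succ] at this
  linarith

/-- The floor costs one step, which the cubic term of `-log (1 - x)` pays for. -/
lemma mul_one_sub_div_pow_floor_le {n : ℕ} (hn : 3 ≤ n) {α : ℝ} (hα0 : 0 < α) (hα1 : α ≤ 1) :
    (n : ℝ) * (1 - α / n) ^ ⌊2 / α * n * Real.log n⌋₊ ≤ 1 / n := by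
  have hn0 : (0 : ℝ) < n := by positivity
  have hn3 : (3 : ℝ) ≤ n := by exact_mod_cast hn
  set x := α / n with hx
  have hx0 : 0 < x := by positivity
  have hx3 : x ≤ 1 / 3 := by rw [hx, div_le_iff₀ hn0]; linarith
  have hlog : 1 ≤ Real.log n := by
    rw [Real.le_log_iff_exp_le hn0]
    linarith [Real.exp_one_lt_d9]
  set L := -Real.log (1 - x) with hLdef
  have hL : x + x ^ 2 / 2 + x ^ 3 / 3 ≤ L :=
    add_sq_div_two_add_pow_three_div_three_le_neg_log_one_sub hx0.le (by linarith)
  set c := 2 * Real.log n with hc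
  set t := ⌊2 / α * n * Real.log n⌋₊
  have ht : c / x - 1 < t := by
    have hT : 2 / α * n * Real.log n = c / x := by rw [hx, hc]; field_simp
    rw [← hT]
    exact Nat.sub_one_lt_floor _
  have htL : c ≤ t * L := by
    have hkey : c * x ≤ L * (c - x) := by
      nlinarith [pow_pos hx0 3, mul_le_mul_of_nonneg_left hL (by linarith : 0 ≤ c - x)]
    calc c = c * x / x := by field_simp
      _ ≤ L * (c - x) / x := by gcongr
      _ = (c / x - 1) * L := by field_simp
      _ ≤ t * L := by gcongr; exact (lt_of_lt_of_le (by positivity) hL).le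
  have hexp : Real.exp c = n * n := by rw [hc, two_mul, Real.exp_add, Real.exp_log hn0]
  calc (n : ℝ) * (1 - x) ^ t = n * Real.exp (-(t * L)) := by
        rw [hLdef, mul_neg, neg_neg, Real.exp_nat_mul, Real.exp_log (by linarith)]
    _ ≤ n * Real.exp (-c) := by gcongr
    _ = 1 / n := by
        rw [Real.exp_neg, hexp]
        field_simp


/-- Biased majority dynamics on the cycle `C_n` (`n ≥ 3`) with bias `α ∈ (0,1]`,
started from all zeros: with probability at least `1 - 1/n`, all nodes hold `1`
by time `(2/α) n log n`. -/
theorem stmt_16 {Ω : Type*} [MeasurableSpace Ω] (μ : Measure Ω) [IsProbabilityMeasure μ]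
    (n : ℕ) [NeZero n] (hn : 3 ≤ n)
    (α : ℝ) (hα0 : 0 < α) (hα1 : α ≤ 1)
    (X : ℕ → Ω → (ZMod n → Bool))
    (hstart : ∀ᵐ ω ∂μ, X 0 ω = fun _ => false)
    (hstep : ∀ (t : ℕ) (f : ℕ → ZMod n → Bool) (c' : ZMod n → Bool),
      μ {ω | X (t + 1) ω = c' ∧ ∀ s ≤ t, X s ω = f s}
        = ENNReal.ofReal (stepProb (cycleGraph n) α (f t) c')
            * μ {ω | ∀ s ≤ t, X s ω = f s}) :
    1 - ENNReal.ofReal (1 / n)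
      ≤ μ {ω | ∃ t : ℕ, (t : ℝ) ≤ 2 / α * n * Real.log n ∧ X t ω = fun _ => true} := by
  have hrate := one_sub_div_natCast_nonneg n hα1
  set t := ⌊2 / α * n * Real.log n⌋₊
  set E := {ω | ∃ t : ℕ, (t : ℝ) ≤ 2 / α * n * Real.log n ∧ X t ω = fun _ => true}
  have hE : Eᶜ ⊆ {ω | 1 ≤ ENNReal.ofReal (zeroCount (X t ω))} := fun ω hω =>
    ENNReal.one_le_ofReal.2 <| one_le_zeroCount fun hX => hω ⟨t, Nat.floor_le (by positivity), hX⟩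
  have hEc : μ Eᶜ ≤ ENNReal.ofReal (1 / n) :=
    calc μ Eᶜ
        ≤ ENNReal.ofReal (1 - α / n) ^ t * ENNReal.ofReal (zeroCount fun _ : ZMod n => false) :=
          (measure_mono hE).trans <| IsMarkovWith.measure_one_le_potential_le hstep hstart
            (fun c => (sum_ofReal_stepProb_cycleGraph_mul_zeroCount hn hα0.le hα1 c).le) t
      _ = ENNReal.ofReal (n * (1 - α / n) ^ t) := by
          rw [zeroCount_const_false, ZMod.card, ← ENNReal.ofReal_pow hrate, mul_comm,
            ENNReal.ofReal_mul n.cast_nonneg]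
      _ ≤ ENNReal.ofReal (1 / n) :=
          ENNReal.ofReal_le_ofReal (mul_one_sub_div_pow_floor_le hn hα0 hα1)
  rw [tsub_le_iff_right]
  calc 1 ≤ μ E + μ Eᶜ := by simpa using measure_univ_le_add_compl (μ := μ) E
    _ ≤ μ E + ENNReal.ofReal (1 / n) := by gcongr
end
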